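/- arXiv:2403.01639 — 2 statements merged into one kernel-verified Lean document; each statement's English description precedes it below -/
import Mathlib

section
/- Let X be an ℝ^d-valued random variable with density f_X and finite differential entropy H(X). Suppose G: ℝ^d → ℝ^d is a C^1 map such that for every x ∈ ℝ^d the Jacobian determinant satisfies 0 < c₁ ≤ det(∇G(x)) ≤ M, every point has finitely many preimages under G, and G(X) has density f_{G(X)}(y) = Σ_{x ∈ G^{-1}(y)} f_X(x)/det(∇G(x)). Then the differential entropy of G(X) satisfies H(G(X)) ≤ H(X) + log M. -/
/-!
Each preimage `x` of `y` contributes `f x / det ∇G(x) ≥ f x / M` to the sum defining `g y`, so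
`f ≤ M · (g ∘ G)` pointwise. As `f(X) > 0` almost surely, `log f(X) ≤ log g(G X) + log M` almost
surely, and taking expectations (`E[log f(X)] = ∫ f log f`, `E[log g(G X)] = ∫ g log g`) gives the
bound. The one delicate point is the measurability of `g`: by the inverse function theorem `G` is a
local homeomorphism, so the space splits into countably many Borel pieces on which `G` is
injective, and by Lusin–Souslin the part of the fibre sum coming from each piece is measurable.
-/

open MeasureTheory Set Filter Topology Function

theorem isLocalHomeomorph_of_hasStrictFDerivAt_equiv {𝕜 E F : Type*}
    [NontriviallyNormedField 𝕜] [NormedAddCommGroup E] [NormedSpace 𝕜 E] [CompleteSpace E]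
    [NormedAddCommGroup F] [NormedSpace 𝕜 F]
    {G : E → F} {G' : E → E ≃L[𝕜] F} (hG : ∀ x, HasStrictFDerivAt G (G' x : E →L[𝕜] F) x) :
    IsLocalHomeomorph G := fun x =>
  ⟨(hG x).toOpenPartialHomeomorph G, (hG x).mem_toOpenPartialHomeomorph_source,
    (hG x).toOpenPartialHomeomorph_coe.symm⟩

theorem ContDiff.isLocalHomeomorph_of_det_fderiv_ne_zero {𝕜 E : Type*} [RCLike 𝕜]
    [NormedAddCommGroup E] [NormedSpace 𝕜 E] [FiniteDimensional 𝕜 E] {G : E → E}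
    (hG : ContDiff 𝕜 1 G) (hdet : ∀ x, LinearMap.det (fderiv 𝕜 G x : E →ₗ[𝕜] E) ≠ 0) :
    IsLocalHomeomorph G := by
  have : CompleteSpace E := FiniteDimensional.complete 𝕜 E
  exact isLocalHomeomorph_of_hasStrictFDerivAt_equiv
    (G' := fun x => (LinearMap.equivOfDetNeZero _ (hdet x)).toContinuousLinearEquiv)
    fun x => hG.contDiffAt.hasStrictFDerivAt one_ne_zero

section FiberSum

variable {X Y M : Type*} [AddCommMonoid M]

theorem tendsto_sum_range_finsum_mem_inter [TopologicalSpace M] {s : Set X} (hs : s.Finite)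
    {D : ℕ → Set X} (hD : Pairwise (Disjoint on D)) (hcover : ⋃ n, D n = univ) (F : X → M) :
    Tendsto (fun N => ∑ n ∈ Finset.range N, ∑ᶠ x ∈ s ∩ D n, F x) atTop
      (𝓝 (∑ᶠ x ∈ s, F x)) := by
  have hcovered : ∀ᶠ N in atTop, s ⊆ ⋃ n ∈ (Finset.range N : Set ℕ), D n := by
    refine (eventually_all_finite hs).2 fun x _ => ?_
    obtain ⟨n, hn⟩ := mem_iUnion.1 (hcover.symm ▸ mem_univ x : x ∈ ⋃ n, D n)
    filter_upwards [eventually_gt_atTop n] with N hN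
    exact mem_biUnion (Finset.mem_coe.2 (Finset.mem_range.2 hN)) hn
  refine tendsto_nhds_of_eventually_eq (hcovered.mono fun N hN => ?_)
  have hdisj : (↑(Finset.range N) : Set ℕ).PairwiseDisjoint fun n => s ∩ D n :=
    fun m _ n _ hmn => (hD hmn).mono inter_subset_right inter_subset_right
  rw [← finsum_mem_coe_finset, ← finsum_mem_biUnion hdisj (Finset.finite_toSet _)
    fun n _ => hs.subset inter_subset_left, ← inter_iUnion₂, inter_eq_left.2 hN]

variable {G : X → Y}

theorem finsum_mem_preimage_singleton_inter_eq_extend {D : Set X} (hinj : InjOn G D)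
    (F : X → M) (y : Y) :
    ∑ᶠ x ∈ G ⁻¹' {y} ∩ D, F x = extend (D.domRestrict G) (fun x => F x) 0 y := by
  by_cases hy : ∃ x : D, D.domRestrict G x = y
  · obtain ⟨⟨x, hx⟩, rfl⟩ := hy
    have hfiber : G ⁻¹' {G x} ∩ D = {x} :=
      Subset.antisymm (fun z ⟨hz, hzD⟩ => hinj hzD hx hz) (singleton_subset_iff.2 ⟨rfl, hx⟩)
    have hext := (injOn_iff_injective.1 hinj).extend_apply (fun x : D => F x) 0 ⟨x, hx⟩
    rw [domRestrict_apply] at hext ⊢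
    rw [hext, hfiber, finsum_mem_singleton]
  · rw [extend_apply' _ _ _ hy, Pi.zero_apply]
    exact finsum_mem_eq_zero_of_forall_eq_zero fun x ⟨hx, hxD⟩ => absurd ⟨⟨x, hxD⟩, hx⟩ hy

theorem le_finsum_mem_preimage_singleton_of_nonneg [PartialOrder M] [IsOrderedAddMonoid M]
    {F : X → M} (hF : ∀ x, 0 ≤ F x) (x : X) (hfin : (G ⁻¹' {G x}).Finite) :
    F x ≤ ∑ᶠ z ∈ G ⁻¹' {G x}, F z := by
  rw [finsum_mem_eq_finite_toFinset_sum _ hfin]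
  exact Finset.single_le_sum (fun z _ => hF z) (hfin.mem_toFinset.2 rfl)

theorem IsLocallyInjective.exists_measurable_partition [TopologicalSpace X]
    [SecondCountableTopology X] [MeasurableSpace X] [OpensMeasurableSpace X]
    (hG : IsLocallyInjective G) :
    ∃ D : ℕ → Set X, (∀ n, MeasurableSet (D n)) ∧ Pairwise (Disjoint on D) ∧
      ⋃ n, D n = univ ∧ ∀ n, InjOn G (D n) := by
  set S := {U : Set X | IsOpen U ∧ InjOn G U}
  obtain ⟨T, hTc, hTS, hTU⟩ := TopologicalSpace.isOpen_sUnion_countable S fun U hU => hU.1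
  -- `∅ ∈ S` is added so that the countable family can be enumerated even when `X` is empty
  obtain ⟨U, hU⟩ := (hTc.insert ∅).exists_eq_range (insert_nonempty _ _)
  have hUS : ∀ n, U n ∈ S := by
    intro n
    rcases (hU ▸ mem_range_self n : U n ∈ insert ∅ T) with hn | hn
    · exact hn ▸ ⟨isOpen_empty, injOn_empty G⟩
    · exact hTS hn
  have hUcover : ⋃ n, U n = univ := by
    rw [← sUnion_range, ← hU, sUnion_insert, empty_union, hTU]
    refine eq_univ_of_forall fun x => ?_
    obtain ⟨V, hV, hxV, hVinj⟩ := hG x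
    exact mem_sUnion_of_mem hxV ⟨hV, hVinj⟩
  exact ⟨disjointed U, MeasurableSet.disjointed fun n => (hUS n).1.measurableSet,
    disjoint_disjointed U, iUnion_disjointed.trans hUcover,
    fun n => (hUS n).2.mono (disjointed_subset U n)⟩

variable [TopologicalSpace X] [PolishSpace X] [MeasurableSpace X] [BorelSpace X]
  [TopologicalSpace Y] [T2Space Y] [MeasurableSpace Y] [BorelSpace Y] [MeasurableSpace M]

theorem measurable_finsum_mem_preimage_singleton_inter (hG : Continuous G) {D : Set X}
    (hD : MeasurableSet D) (hinj : InjOn G D) {F : X → M} (hF : Measurable F) :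
    Measurable fun y => ∑ᶠ x ∈ G ⁻¹' {y} ∩ D, F x := by
  simp_rw [finsum_mem_preimage_singleton_inter_eq_extend hinj]
  exact (hG.continuousOn.measurableEmbedding hD hinj).measurable_extend
    (hF.comp measurable_subtype_coe) measurable_const

theorem measurable_finsum_mem_preimage_singleton [TopologicalSpace M]
    [TopologicalSpace.PseudoMetrizableSpace M] [BorelSpace M] [MeasurableAdd₂ M]
    (hG : Continuous G) (hGinj : IsLocallyInjective G)
    (hfin : ∀ y, (G ⁻¹' {y}).Finite) {F : X → M} (hF : Measurable F) :
    Measurable fun y => ∑ᶠ x ∈ G ⁻¹' {y}, F x := by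
  obtain ⟨D, hDm, hDdisj, hDcover, hDinj⟩ := hGinj.exists_measurable_partition
  exact measurable_of_tendsto_metrizable
    (fun N => Finset.measurable_sum _ fun n _ =>
      measurable_finsum_mem_preimage_singleton_inter hG (hDm n) (hDinj n) hF)
    (tendsto_pi_nhds.2 fun y => tendsto_sum_range_finsum_mem_inter (hfin y) hDdisj hDcover F)

end FiberSum

section DensityTransfer

variable {Ω E : Type*} [MeasurableSpace Ω] [MeasurableSpace E] {μ : Measure Ω} {ν : Measure E}
  {Y : Ω → E} {p : E → ℝ}

theorem integral_comp_eq_integral_mul_of_map_eq_withDensity (hY : AEMeasurable Y μ)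
    (hp : Measurable p) (hp0 : ∀ x, 0 ≤ p x)
    (hlaw : μ.map Y = ν.withDensity fun x => ENNReal.ofReal (p x)) {φ : E → ℝ}
    (hφ : Measurable φ) : ∫ ω, φ (Y ω) ∂μ = ∫ x, p x * φ x ∂ν := by
  rw [← integral_map hY hφ.aestronglyMeasurable, hlaw,
    integral_withDensity_eq_integral_toReal_smul hp.ennreal_ofReal
      (ae_of_all _ fun _ => ENNReal.ofReal_lt_top)]
  simp_rw [ENNReal.toReal_ofReal (hp0 _), smul_eq_mul]

theorem integrable_comp_iff_of_map_eq_withDensity (hY : AEMeasurable Y μ)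
    (hp : Measurable p) (hp0 : ∀ x, 0 ≤ p x)
    (hlaw : μ.map Y = ν.withDensity fun x => ENNReal.ofReal (p x)) {φ : E → ℝ}
    (hφ : Measurable φ) :
    Integrable (fun ω => φ (Y ω)) μ ↔ Integrable (fun x => p x * φ x) ν := by
  refine (integrable_map_measure hφ.aestronglyMeasurable hY).symm.trans ?_
  rw [hlaw, integrable_withDensity_iff hp.ennreal_ofReal
    (ae_of_all _ fun _ => ENNReal.ofReal_lt_top)]
  simp_rw [ENNReal.toReal_ofReal (hp0 _), mul_comm]

theorem ae_pos_of_map_eq_withDensity (hY : AEMeasurable Y μ) (hp : Measurable p)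
    (hlaw : μ.map Y = ν.withDensity fun x => ENNReal.ofReal (p x)) : ∀ᵐ ω ∂μ, 0 < p (Y ω) :=
  ae_of_ae_map hY <| hlaw ▸ (ae_withDensity_iff hp.ennreal_ofReal).2
    (ae_of_all _ fun _ => ENNReal.ofReal_pos.1 ∘ pos_iff_ne_zero.2)

theorem neg_integral_mul_log_le_of_le_mul_comp [IsProbabilityMeasure μ] {E' : Type*}
    [MeasurableSpace E'] {ν' : Measure E'} {T : E → E'} {q : E' → ℝ} (hY : AEMeasurable Y μ)
    (hT : Measurable T) (hp : Measurable p) (hp0 : ∀ x, 0 ≤ p x)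
    (hp_law : μ.map Y = ν.withDensity fun x => ENNReal.ofReal (p x))
    (hp_int : Integrable (fun x => p x * Real.log (p x)) ν) (hq : Measurable q)
    (hq0 : ∀ y, 0 ≤ q y)
    (hq_law : μ.map (fun ω => T (Y ω)) = ν'.withDensity fun y => ENNReal.ofReal (q y))
    (hq_int : Integrable (fun y => q y * Real.log (q y)) ν') {C : ℝ} (hC : 0 < C)
    (hpq : ∀ x, p x ≤ C * q (T x)) :
    -∫ y, q y * Real.log (q y) ∂ν' ≤ -∫ x, p x * Real.log (p x) ∂ν + Real.log C := by
  have hTY : AEMeasurable (fun ω => T (Y ω)) μ := hT.comp_aemeasurable hY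
  have hlog_le : ∀ᵐ ω ∂μ, Real.log (p (Y ω)) ≤ Real.log (q (T (Y ω))) + Real.log C := by
    filter_upwards [ae_pos_of_map_eq_withDensity hY hp hp_law] with ω hpos
    have hqpos : 0 < q (T (Y ω)) := pos_of_mul_pos_right (hpos.trans_le (hpq _)) hC.le
    rw [← Real.log_mul hqpos.ne' hC.ne', mul_comm]
    exact Real.log_le_log hpos (hpq _)
  have hp_log := (integrable_comp_iff_of_map_eq_withDensity hY hp hp0 hp_law hp.log).2 hp_int
  have hq_log := (integrable_comp_iff_of_map_eq_withDensity hTY hq hq0 hq_law hq.log).2 hq_int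
  have hmono : ∫ ω, Real.log (p (Y ω)) ∂μ ≤ ∫ ω, (Real.log (q (T (Y ω))) + Real.log C) ∂μ :=
    integral_mono_ae hp_log (hq_log.add (integrable_const _)) hlog_le
  rw [integral_add hq_log (integrable_const _), integral_const, probReal_univ, one_smul,
    integral_comp_eq_integral_mul_of_map_eq_withDensity hY hp hp0 hp_law hp.log,
    integral_comp_eq_integral_mul_of_map_eq_withDensity hTY hq hq0 hq_law hq.log] at hmono
  linarith

end DensityTransfer

/-- Entropy change under a smooth (possibly non-injective) map with Jacobian determinant
bounded in `[c₁, M]` with `c₁ > 0`: if `G(X)` has the change-of-variables density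
`g(y) = Σ_{x ∈ G⁻¹(y)} f(x) / det(∇G(x))`, then `H(G(X)) ≤ H(X) + log M`. -/
theorem entropy_nonlinear_map_upper_bound
    {d : ℕ} {Ω : Type*} [MeasurableSpace Ω]
    (μ : Measure Ω) [IsProbabilityMeasure μ]
    (X : Ω → (Fin d → ℝ)) (hX : Measurable X)
    (f : (Fin d → ℝ) → ℝ) (hf_nonneg : ∀ x, 0 ≤ f x) (hf_meas : Measurable f)
    (hf_law : Measure.map X μ = volume.withDensity (fun x => ENNReal.ofReal (f x)))
    (hf_ent : Integrable (fun x => f x * Real.log (f x)))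
    (G : (Fin d → ℝ) → (Fin d → ℝ)) (hG : ContDiff ℝ 1 G)
    (c₁ M : ℝ) (hc₁ : 0 < c₁)
    (hJac : ∀ x, c₁ ≤ LinearMap.det ((fderiv ℝ G x : (Fin d → ℝ) →ₗ[ℝ] (Fin d → ℝ))) ∧
      LinearMap.det ((fderiv ℝ G x : (Fin d → ℝ) →ₗ[ℝ] (Fin d → ℝ))) ≤ M)
    (hfin : ∀ y, (G ⁻¹' {y}).Finite)
    (g : (Fin d → ℝ) → ℝ)
    (hg : ∀ y, g y = ∑ᶠ x ∈ G ⁻¹' {y},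
      f x / LinearMap.det ((fderiv ℝ G x : (Fin d → ℝ) →ₗ[ℝ] (Fin d → ℝ))))
    (hg_law : Measure.map (fun ω => G (X ω)) μ
      = volume.withDensity (fun y => ENNReal.ofReal (g y)))
    (hg_ent : Integrable (fun y => g y * Real.log (g y))) :
    (-∫ y, g y * Real.log (g y)) ≤ (-∫ x, f x * Real.log (f x)) + Real.log M := by
  set J := fun x => LinearMap.det ((fderiv ℝ G x : (Fin d → ℝ) →ₗ[ℝ] (Fin d → ℝ)))
  have hJpos : ∀ x, 0 < J x := fun x => hc₁.trans_le (hJac x).1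
  have hMpos : 0 < M := (hJpos 0).trans_le (hJac 0).2
  have hJ : Measurable J :=
    (ContinuousLinearMap.continuous_det.comp (hG.continuous_fderiv one_ne_zero)).measurable
  have hGloc : IsLocalHomeomorph G :=
    hG.isLocalHomeomorph_of_det_fderiv_ne_zero fun x => (hJpos x).ne'
  have hF0 : ∀ x, 0 ≤ f x / J x := fun x => div_nonneg (hf_nonneg x) (hJpos x).le
  refine neg_integral_mul_log_le_of_le_mul_comp hX.aemeasurable hGloc.continuous.measurable
    hf_meas hf_nonneg hf_law hf_ent ?_ (fun y => ?_) hg_law hg_ent hMpos fun x => ?_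
  · exact funext hg ▸ measurable_finsum_mem_preimage_singleton hGloc.continuous
      hGloc.isLocallyInjective hfin (hf_meas.div hJ)
  · exact hg y ▸ finsum_nonneg fun x => finsum_nonneg fun _ => hF0 x
  · calc f x = M * (f x / M) := by field_simp
      _ ≤ M * (f x / J x) := by gcongr; exacts [hf_nonneg x, hJpos x, (hJac x).2]
      _ ≤ M * g (G x) := by
        gcongr
        exact hg (G x) ▸ le_finsum_mem_preimage_singleton_of_nonneg hF0 x (hfin (G x))
end

section
/- Consider a two-component GMM w₁N(μ₁, I_d) + w₂N(μ₂, I_d) with w₁, w₂ > 0, w₁ + w₂ = 1, and let μ = (μ₁ - μ₂)/2. For the guided DDIM ODE dx_t/dt with guidance strength η ≥ 0 and the unguided ODE for z_t, one has 2 d/dt⟨x_t, μ⟩ = e^{-(T-t)}(‖μ₁‖² - ⟨μ₁, μ₂⟩) + 4η e^{-(T-t)}(1 - q_{T-t}(x_t, 1))‖μ‖² and 2 d/dt⟨z_t, μ⟩ = e^{-(T-t)}(‖μ₁‖² - ⟨μ₁, μ₂⟩). Consequently, if ⟨x₀, μ⟩ ≥ ⟨z₀, μ⟩, then ⟨x_t,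 μ⟩ ≥ ⟨z_t, μ⟩ for all t ∈ [0,T], and hence the posterior probability of class 1 satisfies 𝒫(x_t, 1) ≥ 𝒫(z_t, 1). -/
/-!
Along both flows, `2⟪·, μ⟫` with `μ = (μ₁ - μ₂)/2` changes at the common rate
`e^{-(T-t)}(‖μ₁‖² - ⟪μ₁, μ₂⟫)`, except that guidance adds `4η e^{-(T-t)}(1 - q)‖μ‖² ≥ 0`,
since `q ≤ 1`. The gap `⟪x_t - z_t, μ⟫` is therefore nondecreasing and stays nonnegative.
The posterior `𝒫(p, 1)` depends on `p` only through `⟪p, μ₁⟫ - ⟪p, μ₂⟫ = 2⟪p, μ⟫`,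
and is increasing in it.
-/

open scoped RealInnerProductSpace
open Set

lemma weighted_softmax_le_one {w₁ w₂ : ℝ} (hw₁ : 0 ≤ w₁) (hw₂ : 0 ≤ w₂) (a b : ℝ) :
    w₁ * Real.exp a / (w₁ * Real.exp a + w₂ * Real.exp b) ≤ 1 :=
  div_le_one_of_le₀ (le_add_of_nonneg_right (by positivity)) (by positivity)

lemma weighted_softmax_le_of_sub_le {w₁ w₂ : ℝ} (hw₁ : 0 < w₁) (hw₂ : 0 ≤ w₂)
    {a₁ a₂ b₁ b₂ : ℝ} (h : a₁ - a₂ ≤ b₁ - b₂) :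
    w₁ * Real.exp a₁ / (w₁ * Real.exp a₁ + w₂ * Real.exp a₂) ≤
      w₁ * Real.exp b₁ / (w₁ * Real.exp b₁ + w₂ * Real.exp b₂) := by
  rw [div_le_div_iff₀ (by positivity) (by positivity)]
  have hexp : Real.exp a₁ * Real.exp b₂ ≤ Real.exp b₁ * Real.exp a₂ := by
    rw [← Real.exp_add, ← Real.exp_add, Real.exp_le_exp]
    linarith
  have hw : 0 ≤ w₁ * w₂ := by positivity
  nlinarith [mul_le_mul_of_nonneg_left hexp hw]

lemma le_of_hasDerivAt_le_of_le {f g f' g' : ℝ → ℝ} {a b : ℝ}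
    (hf : ∀ t ∈ Icc a b, HasDerivAt f (f' t) t) (hg : ∀ t ∈ Icc a b, HasDerivAt g (g' t) t)
    (hfg' : ∀ t ∈ Ioo a b, g' t ≤ f' t) (ha : g a ≤ f a) {t : ℝ} (ht : t ∈ Icc a b) :
    g t ≤ f t := by
  have hderiv : ∀ s ∈ Icc a b, HasDerivAt (f - g) (f' s - g' s) s :=
    fun s hs => (hf s hs).sub (hg s hs)
  have hmono : MonotoneOn (f - g) (Icc a b) := by
    refine monotoneOn_of_hasDerivWithinAt_nonneg (convex_Icc a b)
      (fun s hs => (hderiv s hs).continuousAt.continuousWithinAt) (f' := f' - g') ?_ ?_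
    · rw [interior_Icc]
      exact fun s hs => (hderiv s (Ioo_subset_Icc_self hs)).hasDerivWithinAt
    · rw [interior_Icc]
      exact fun s hs => sub_nonneg.2 (hfg' s hs)
  have := hmono (left_mem_Icc.2 (ht.1.trans ht.2)) ht ht.1
  simp only [Pi.sub_apply] at this
  linarith

section InnerDrift

variable {E : Type*} [NormedAddCommGroup E] [InnerProductSpace ℝ E]

lemma HasDerivAt.two_mul_inner_const {x : ℝ → E} {x' : E} {t : ℝ} (hx : HasDerivAt x x' t)
    (v : E) : HasDerivAt (fun s => 2 * ⟪x s, v⟫) (2 * ⟪x', v⟫) t := by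
  simpa using ((hx.inner ℝ (hasDerivAt_const t v)).const_mul 2)

lemma two_mul_inner_half_sub (p μ₁ μ₂ : E) :
    2 * ⟪p, (1 / 2 : ℝ) • (μ₁ - μ₂)⟫ = ⟪p, μ₁⟫ - ⟪p, μ₂⟫ := by
  rw [inner_smul_right, inner_sub_right]
  ring

lemma two_mul_inner_unguided_drift (e : ℝ) (μ₁ μ₂ : E) :
    2 * ⟪e • μ₁, (1 / 2 : ℝ) • (μ₁ - μ₂)⟫ = e * (‖μ₁‖ ^ 2 - ⟪μ₁, μ₂⟫) := by
  rw [two_mul_inner_half_sub, real_inner_smul_left, real_inner_smul_left,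
    real_inner_self_eq_norm_sq]
  ring

lemma two_mul_inner_guided_drift (e η u : ℝ) (μ₁ μ₂ : E) :
    2 * ⟪e • μ₁ + η • (e • μ₁ - e • (u • μ₁ + (1 - u) • μ₂)), (1 / 2 : ℝ) • (μ₁ - μ₂)⟫ =
      e * (‖μ₁‖ ^ 2 - ⟪μ₁, μ₂⟫) + 4 * η * e * (1 - u) * ‖(1 / 2 : ℝ) • (μ₁ - μ₂)‖ ^ 2 := by
  have hguidance : η • (e • μ₁ - e • (u • μ₁ + (1 - u) • μ₂)) =
      (2 * η * e * (1 - u)) • ((1 / 2 : ℝ) • (μ₁ - μ₂)) := by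
    module
  rw [hguidance, inner_add_left, mul_add, two_mul_inner_unguided_drift, real_inner_smul_left,
    real_inner_self_eq_norm_sq]
  ring

end InnerDrift

theorem two_component_guided_confidence_general
    {d : ℕ}
    (w₁ w₂ : ℝ) (hw₁ : 0 < w₁) (hw₂ : 0 < w₂)
    (μ₁ μ₂ : EuclideanSpace ℝ (Fin d))
    (μm : EuclideanSpace ℝ (Fin d)) (hμm : μm = (1 / 2 : ℝ) • (μ₁ - μ₂))
    (T η : ℝ) (hη : 0 ≤ η)
    (q : ℝ → EuclideanSpace ℝ (Fin d) → ℝ)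
    (hq : ∀ s p, q s p =
      w₁ * Real.exp (Real.exp (-s) * ⟪μ₁, p⟫ - Real.exp (-(2 * s)) * ‖μ₁‖ ^ 2 / 2) /
        (w₁ * Real.exp (Real.exp (-s) * ⟪μ₁, p⟫ - Real.exp (-(2 * s)) * ‖μ₁‖ ^ 2 / 2)
          + w₂ * Real.exp (Real.exp (-s) * ⟪μ₂, p⟫ - Real.exp (-(2 * s)) * ‖μ₂‖ ^ 2 / 2)))
    (P : EuclideanSpace ℝ (Fin d) → ℝ)
    (hP : ∀ p, P p =
      w₁ * Real.exp (⟪p, μ₁⟫ - ‖μ₁‖ ^ 2 / 2) /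
        (w₁ * Real.exp (⟪p, μ₁⟫ - ‖μ₁‖ ^ 2 / 2) + w₂ * Real.exp (⟪p, μ₂⟫ - ‖μ₂‖ ^ 2 / 2)))
    (x z : ℝ → EuclideanSpace ℝ (Fin d))
    (hx : ∀ t ∈ Set.Icc (0:ℝ) T, HasDerivAt x
      (Real.exp (-(T - t)) • μ₁ + η •
        (Real.exp (-(T - t)) • μ₁
          - Real.exp (-(T - t)) • (q (T - t) (x t) • μ₁ + (1 - q (T - t) (x t)) • μ₂))) t)
    (hz : ∀ t ∈ Set.Icc (0:ℝ) T, HasDerivAt z (Real.exp (-(T - t)) • μ₁) t) :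
    (∀ t ∈ Set.Icc (0:ℝ) T, HasDerivAt (fun s => 2 * ⟪x s, μm⟫)
      (Real.exp (-(T - t)) * (‖μ₁‖ ^ 2 - ⟪μ₁, μ₂⟫)
        + 4 * η * Real.exp (-(T - t)) * (1 - q (T - t) (x t)) * ‖μm‖ ^ 2) t) ∧
    (∀ t ∈ Set.Icc (0:ℝ) T, HasDerivAt (fun s => 2 * ⟪z s, μm⟫)
      (Real.exp (-(T - t)) * (‖μ₁‖ ^ 2 - ⟪μ₁, μ₂⟫)) t) ∧
    (⟪z 0, μm⟫ ≤ ⟪x 0, μm⟫ →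
      ∀ t ∈ Set.Icc (0:ℝ) T, ⟪z t, μm⟫ ≤ ⟪x t, μm⟫ ∧ P (z t) ≤ P (x t)) := by
  subst hμm
  have hxμ : ∀ t ∈ Icc 0 T, HasDerivAt (fun s => 2 * ⟪x s, (1 / 2 : ℝ) • (μ₁ - μ₂)⟫) _ t :=
    fun t ht => two_mul_inner_guided_drift (μ₁ := μ₁) (μ₂ := μ₂) _ η (q (T - t) (x t)) ▸
      (hx t ht).two_mul_inner_const _
  have hzμ : ∀ t ∈ Icc 0 T, HasDerivAt (fun s => 2 * ⟪z s, (1 / 2 : ℝ) • (μ₁ - μ₂)⟫) _ t :=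
    fun t ht => two_mul_inner_unguided_drift (μ₁ := μ₁) (μ₂ := μ₂) _ ▸
      (hz t ht).two_mul_inner_const _
  refine ⟨hxμ, hzμ, fun h₀ t ht => ?_⟩
  have hq_le : ∀ s, q (T - s) (x s) ≤ 1 := fun s => (hq _ _).symm ▸
    weighted_softmax_le_one hw₁.le hw₂.le _ _
  have hgap : 2 * ⟪z t, (1 / 2 : ℝ) • (μ₁ - μ₂)⟫ ≤ 2 * ⟪x t, (1 / 2 : ℝ) • (μ₁ - μ₂)⟫ :=
    le_of_hasDerivAt_le_of_le hxμ hzμ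
      (fun s _ => le_add_of_nonneg_right (by have := sub_nonneg.2 (hq_le s); positivity))
      (by linarith) ht
  refine ⟨by linarith, ?_⟩
  rw [hP, hP]
  apply weighted_softmax_le_of_sub_le hw₁ hw₂.le
  rw [two_mul_inner_half_sub, two_mul_inner_half_sub] at hgap
  linarith

/-- Two-component GMM `w₁ N(μ₁, I) + w₂ N(μ₂, I)`, `μ = (μ₁ - μ₂)/2`. The guided DDIM
ODE with strength `η ≥ 0` and the unguided ODE satisfy the stated derivative identities
for `2⟨x_t, μ⟩` and `2⟨z_t, μ⟩`; consequently, if `⟨x₀, μ⟩ ≥ ⟨z₀, μ⟩` then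
`⟨x_t, μ⟩ ≥ ⟨z_t, μ⟩` on `[0,T]`, and hence `𝒫(x_t, 1) ≥ 𝒫(z_t, 1)`. -/
theorem two_component_guided_confidence
    {d : ℕ}
    (w₁ w₂ : ℝ) (hw₁ : 0 < w₁) (hw₂ : 0 < w₂) (hw : w₁ + w₂ = 1)
    (μ₁ μ₂ : EuclideanSpace ℝ (Fin d))
    (μm : EuclideanSpace ℝ (Fin d)) (hμm : μm = (1 / 2 : ℝ) • (μ₁ - μ₂))
    (T η : ℝ) (hT : 0 < T) (hη : 0 ≤ η)
    (q : ℝ → EuclideanSpace ℝ (Fin d) → ℝ)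
    (hq : ∀ s p, q s p =
      w₁ * Real.exp (Real.exp (-s) * ⟪μ₁, p⟫ - Real.exp (-(2 * s)) * ‖μ₁‖ ^ 2 / 2) /
        (w₁ * Real.exp (Real.exp (-s) * ⟪μ₁, p⟫ - Real.exp (-(2 * s)) * ‖μ₁‖ ^ 2 / 2)
          + w₂ * Real.exp (Real.exp (-s) * ⟪μ₂, p⟫ - Real.exp (-(2 * s)) * ‖μ₂‖ ^ 2 / 2)))
    (P : EuclideanSpace ℝ (Fin d) → ℝ)
    (hP : ∀ p, P p =
      w₁ * Real.exp (⟪p, μ₁⟫ - ‖μ₁‖ ^ 2 / 2) /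
        (w₁ * Real.exp (⟪p, μ₁⟫ - ‖μ₁‖ ^ 2 / 2) + w₂ * Real.exp (⟪p, μ₂⟫ - ‖μ₂‖ ^ 2 / 2)))
    (x z : ℝ → EuclideanSpace ℝ (Fin d))
    (hx : ∀ t ∈ Set.Icc (0:ℝ) T, HasDerivAt x
      (Real.exp (-(T - t)) • μ₁ + η •
        (Real.exp (-(T - t)) • μ₁
          - Real.exp (-(T - t)) • (q (T - t) (x t) • μ₁ + (1 - q (T - t) (x t)) • μ₂))) t)
    (hz : ∀ t ∈ Set.Icc (0:ℝ) T, HasDerivAt z (Real.exp (-(T - t)) • μ₁) t) :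
    (∀ t ∈ Set.Icc (0:ℝ) T, HasDerivAt (fun s => 2 * ⟪x s, μm⟫)
      (Real.exp (-(T - t)) * (‖μ₁‖ ^ 2 - ⟪μ₁, μ₂⟫)
        + 4 * η * Real.exp (-(T - t)) * (1 - q (T - t) (x t)) * ‖μm‖ ^ 2) t) ∧
    (∀ t ∈ Set.Icc (0:ℝ) T, HasDerivAt (fun s => 2 * ⟪z s, μm⟫)
      (Real.exp (-(T - t)) * (‖μ₁‖ ^ 2 - ⟪μ₁, μ₂⟫)) t) ∧
    (⟪z 0, μm⟫ ≤ ⟪x 0, μm⟫ →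
      ∀ t ∈ Set.Icc (0:ℝ) T, ⟪z t, μm⟫ ≤ ⟪x t, μm⟫ ∧ P (z t) ≤ P (x t)) :=
  two_component_guided_confidence_general w₁ w₂ hw₁ hw₂ μ₁ μ₂ μm hμm T η hη q hq P hP x z hx hz
end
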